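/- arXiv:2411.17577 — 2 statements merged into one kernel-verified Lean document; each statement's English description precedes it below -/
import Mathlib

section
/- Let q ∈ (0,1), let n be a positive integer and let d ≠ 1 be a divisor of n. Then P_q(d,n) ≤ M(q, n/d)^{φ(d)}, where φ is Euler's totient function and M(q,m) = max_{0 ≤ k ≤ m} φ_q(k,m). -/
open Finset

/-- The binomial probability mass function. -/
noncomputable def phi (q : ℝ) (k n : ℕ) : ℝ :=
  (n.choose k : ℝ) * q ^ k * (1 - q) ^ (n - k)

/-- The Bernoulli(q) probability weight of an outcome `c : Fin n → Bool`. -/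
noncomputable def bernWeight (q : ℝ) (n : ℕ) (c : Fin n → Bool) : ℝ :=
  q ^ (Finset.univ.filter (fun j => c j = true)).card *
    (1 - q) ^ (n - (Finset.univ.filter (fun j => c j = true)).card)

/-- Probability that the random 0/1 polynomial ∑_j c_j x^j of degree < n (with i.i.d.
Bernoulli(q) coefficients) vanishes at the primitive d-th root of unity exp(2πi/d),
i.e. that it is divisible by the d-th cyclotomic polynomial. -/
noncomputable def Pqd (q : ℝ) (d n : ℕ) : ℝ :=
  ∑ c : Fin n → Bool,
    if (∑ j : Fin n,
          (if c j then (1 : ℂ) else 0) *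
            Complex.exp (2 * Real.pi * Complex.I / d) ^ (j : ℕ)) = 0 then
      bernWeight q n c
    else 0

/-- The maximum of the binomial pmf with parameters n and q. -/
noncomputable def Mq (q : ℝ) (n : ℕ) : ℝ :=
  (Finset.range (n + 1)).sup' Finset.nonempty_range_add_one (fun k => phi q k n)

/-!
Write the coefficient index as `j = r + d * i` with `r < d` and `i < m = n / d`. Since `ζ ^ d = 1`,
the evaluation `∑ c_j ζ ^ j` equals `∑ s_r ζ ^ r`, where the block counts `s_r` are independent
`Binomial(m, q)` variables. The powers `1, ζ, …, ζ ^ (φ(d) - 1)` are linearly independent over `ℚ`,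
so a vanishing combination is determined by its counts `s_r` with `r ≥ φ(d)`: once these are
fixed, each of the other `φ(d)` counts is pinned to one value, of probability at most `M(q, m)`.
-/

section Binomial

variable {q : ℝ}

lemma phi_nonneg (hq0 : 0 ≤ q) (hq1 : q ≤ 1) (k n : ℕ) : 0 ≤ phi q k n := by
  have h1q : 0 ≤ 1 - q := sub_nonneg.2 hq1
  unfold phi
  positivity

lemma phi_le_Mq {k n : ℕ} (hk : k ≤ n) : phi q k n ≤ Mq q n :=
  le_sup' (fun k => phi q k n) (mem_range.2 (Nat.lt_succ_of_le hk))

lemma Mq_nonneg (hq0 : 0 ≤ q) (hq1 : q ≤ 1) (n : ℕ) : 0 ≤ Mq q n :=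
  (phi_nonneg hq0 hq1 0 n).trans (phi_le_Mq n.zero_le)

lemma sum_range_phi (q : ℝ) (n : ℕ) : ∑ k ∈ range (n + 1), phi q k n = 1 := by
  have h := (add_pow q (1 - q) n).symm
  rw [add_sub_cancel, one_pow] at h
  rw [← h]
  exact sum_congr rfl fun k _ => by rw [phi]; ring

end Binomial

def numTrue {κ : Type*} [Fintype κ] (b : κ → Bool) : ℕ := #{j | b j = true}

lemma card_numTrue_eq {κ : Type*} [Fintype κ] [DecidableEq κ] (k : ℕ) :
    #{b : κ → Bool | numTrue b = k} = (Fintype.card κ).choose k := by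
  rw [← card_univ, ← card_powersetCard]
  refine card_nbij' (fun b => ({j | b j = true} : Finset κ)) (fun S j => decide (j ∈ S))
    ?_ ?_ ?_ ?_
  · intro b hb
    rw [mem_coe, mem_filter] at hb
    exact mem_powersetCard.2 ⟨subset_univ _, hb.2⟩
  · intro S hS
    rw [mem_coe, mem_powersetCard] at hS
    rw [mem_coe, mem_filter, numTrue]
    simpa using hS.2
  · intro b _
    funext j
    simp
  · intro S _
    ext j
    simp

lemma numTrue_le {m : ℕ} (b : Fin m → Bool) : numTrue b ≤ m :=
  (card_filter_le _ _).trans_eq (card_fin m)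

lemma bernWeight_eq_prod (q : ℝ) (n : ℕ) (c : Fin n → Bool) :
    bernWeight q n c = ∏ j, if c j then q else 1 - q := by
  have hcard := card_filter_add_card_filter_not (s := univ) (fun j => c j = true)
  rw [card_univ, Fintype.card_fin] at hcard
  rw [prod_ite, prod_const, prod_const, bernWeight]
  congr 2
  omega

lemma sum_bernWeight_of_numTrue_eq (q : ℝ) (m k : ℕ) :
    ∑ b : Fin m → Bool with numTrue b = k, bernWeight q m b = phi q k m := by
  rw [sum_congr rfl fun b hb => by rw [bernWeight, ← numTrue, (mem_filter.1 hb).2], sum_const,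
    card_numTrue_eq, Fintype.card_fin, nsmul_eq_mul, phi, mul_assoc]

section Blocks

variable {m d n : ℕ} (h : m * d = n)

def blockEquiv : Fin d × Fin m ≃ Fin n :=
  (Equiv.prodComm _ _).trans (finProdFinEquiv.trans (finCongr h))

lemma blockEquiv_val (r : Fin d) (i : Fin m) : (blockEquiv h (r, i) : ℕ) = r + d * i := by
  simp [blockEquiv]

def blocks {β : Type*} : (Fin d → Fin m → β) ≃ (Fin n → β) :=
  (Equiv.curry _ _ _).symm.trans ((blockEquiv h).arrowCongr (Equiv.refl β))

lemma blocks_apply_blockEquiv {β : Type*} (C : Fin d → Fin m → β) (r : Fin d) (i : Fin m) :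
    blocks h C (blockEquiv h (r, i)) = C r i := by
  simp [blocks]

@[to_additive]
lemma prod_blocks {β M : Type*} [CommMonoid M] (C : Fin d → Fin m → β) (g : ℕ → β → M) :
    ∏ j : Fin n, g j (blocks h C j) = ∏ r : Fin d, ∏ i : Fin m, g (r + d * i) (C r i) := by
  rw [← (blockEquiv h).prod_comp, Fintype.prod_prod_type]
  simp only [blocks_apply_blockEquiv, blockEquiv_val]

lemma bernWeight_blocks (q : ℝ) (C : Fin d → Fin m → Bool) :
    bernWeight q n (blocks h C) = ∏ r, bernWeight q m (C r) := by
  simp only [bernWeight_eq_prod, prod_blocks h C fun _ b => if b then q else 1 - q]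

lemma sum_blocks_mul_pow {R : Type*} [CommRing R] {ζ : R} (hζ : ζ ^ d = 1)
    (C : Fin d → Fin m → Bool) :
    ∑ j, (if blocks h C j then (1 : R) else 0) * ζ ^ (j : ℕ)
      = ∑ r, (numTrue (C r) : R) * ζ ^ (r : ℕ) := by
  rw [sum_blocks h C fun j b => (if b then (1 : R) else 0) * ζ ^ j]
  refine sum_congr rfl fun r _ => ?_
  simp only [pow_add, pow_mul, hζ, one_pow, mul_one, ← sum_mul, sum_boole, numTrue]

end Blocks

lemma sum_ite_prod_bernWeight {ι : Type*} [Fintype ι] [DecidableEq ι] (q : ℝ) (m : ℕ)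
    (p : (ι → ℕ) → Prop) [DecidablePred p] :
    ∑ C : ι → Fin m → Bool,
        (if p (fun r => numTrue (C r)) then ∏ r, bernWeight q m (C r) else 0)
      = ∑ s ∈ (Fintype.piFinset fun _ : ι => range (m + 1)) with p s, ∏ r, phi q (s r) m := by
  have hmaps : ∀ C ∈ (univ : Finset (ι → Fin m → Bool)),
      (fun r => numTrue (C r)) ∈ Fintype.piFinset fun _ : ι => range (m + 1) := by
    intro C _
    simpa [Fintype.mem_piFinset, Nat.lt_succ_iff] using fun r => numTrue_le (C r)
  rw [sum_filter, ← sum_fiberwise_of_maps_to hmaps]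
  refine sum_congr rfl fun s _ => ?_
  have hfiber : ({C | (fun r => numTrue (C r)) = s} : Finset (ι → Fin m → Bool))
      = Fintype.piFinset fun r => ({b | numTrue b = s r} : Finset (Fin m → Bool)) := by
    ext C
    simp [Fintype.mem_piFinset, funext_iff]
  have hconst : ∀ C ∈ ({C | (fun r => numTrue (C r)) = s} : Finset (ι → Fin m → Bool)),
      (if p (fun r => numTrue (C r)) then ∏ r, bernWeight q m (C r) else 0)
        = if p s then ∏ r, bernWeight q m (C r) else 0 := by
    intro C hC
    rw [(mem_filter.1 hC).2]
  rw [sum_congr rfl hconst, hfiber]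
  split_ifs
  · rw [← prod_univ_sum]
    exact prod_congr rfl fun r _ => sum_bernWeight_of_numTrue_eq q m (s r)
  · exact sum_const_zero

lemma Pqd_eq_sum_prod_phi (q : ℝ) {m d n : ℕ} (h : m * d = n) (hd : d ≠ 0) :
    Pqd q d n = ∑ s ∈ (Fintype.piFinset fun _ : Fin d => range (m + 1)) with
        ∑ r : Fin d, (s r : ℂ) * Complex.exp (2 * Real.pi * Complex.I / d) ^ (r : ℕ) = 0,
      ∏ r, phi q (s r) m := by
  have hζ := (Complex.isPrimitiveRoot_exp d hd).pow_eq_one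
  rw [Pqd, ← (blocks h).sum_comp, ← sum_ite_prod_bernWeight]
  simp only [sum_blocks_mul_pow h hζ, bernWeight_blocks]

lemma LinearIndependent.eq_of_sum_smul_eq {R M ι : Type*} [Ring R] [AddCommGroup M] [Module R M]
    [Fintype ι] {p : ι → Prop} [DecidablePred p] {v : ι → M}
    (hv : LinearIndependent R fun i : {i // p i} => v i) {a b : ι → R}
    (h : ∑ i, a i • v i = ∑ i, b i • v i) (hab : ∀ i, ¬p i → a i = b i) : a = b := by
  have hsum : ∑ i, (a i - b i) • v i = 0 := by
    simp only [sub_smul, sum_sub_distrib, h, sub_self]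
  rw [← Fintype.sum_subtype_add_sum_subtype p, Fintype.sum_eq_zero
    (fun i : {i // ¬p i} => (a i - b i) • v i) fun i => by rw [hab i i.2, sub_self, zero_smul],
    add_zero] at hsum
  have hp := Fintype.linearIndependent_iff.1 hv _ hsum
  funext i
  by_cases hi : p i
  · exact sub_eq_zero.1 (hp ⟨i, hi⟩)
  · exact hab i hi

lemma IsPrimitiveRoot.linearIndependent_pow_totient {K : Type*} [Field K] [CharZero K] {ζ : K}
    {d : ℕ} (hζ : IsPrimitiveRoot ζ d) (hd : 0 < d) :
    LinearIndependent ℚ fun i : Fin d.totient => ζ ^ (i : ℕ) := by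
  have h := linearIndependent_pow (K := ℚ) ζ
  rwa [← Polynomial.cyclotomic_eq_minpoly_rat hζ hd, Polynomial.natDegree_cyclotomic] at h

lemma IsPrimitiveRoot.eq_of_sum_natCast_mul_pow_eq {K : Type*} [Field K] [CharZero K] {ζ : K}
    {d : ℕ} (hζ : IsPrimitiveRoot ζ d) (hd : 0 < d) {s₁ s₂ : Fin d → ℕ}
    (h : ∑ r, (s₁ r : K) * ζ ^ (r : ℕ) = ∑ r, (s₂ r : K) * ζ ^ (r : ℕ))
    (hs : ∀ r : Fin d, d.totient ≤ r → s₁ r = s₂ r) : s₁ = s₂ := by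
  let e : {r : Fin d // (r : ℕ) < d.totient} → Fin d.totient := fun r => ⟨r.1, r.2⟩
  have he : Function.Injective e := fun r r' hr => Subtype.ext (Fin.ext (Fin.mk.inj_iff.1 hr))
  have hv : LinearIndependent ℚ fun r : {r : Fin d // (r : ℕ) < d.totient} => ζ ^ (r : ℕ) :=
    (hζ.linearIndependent_pow_totient hd).comp e he
  have hq := LinearIndependent.eq_of_sum_smul_eq (p := fun r : Fin d => (r : ℕ) < d.totient)
    (v := fun r : Fin d => ζ ^ (r : ℕ)) hv (a := fun r => (s₁ r : ℚ)) (b := fun r => (s₂ r : ℚ))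
    (by simpa [Rat.smul_def] using h) fun r hr => by exact_mod_cast hs r (not_lt.1 hr)
  funext r
  exact_mod_cast congrFun hq r

lemma sum_prod_le_of_injOn_restrict {ι α : Type*} [Fintype ι] [DecidableEq ι] (p : ι → Prop)
    [DecidablePred p] {S : Finset α} {Z : Finset (ι → α)} (hZ : Z ⊆ Fintype.piFinset fun _ => S)
    (hinj : Set.InjOn (fun (s : ι → α) (i : {i // p i}) => s i) Z) {w : α → ℝ} {M : ℝ}
    (hw0 : ∀ a ∈ S, 0 ≤ w a) (hwM : ∀ a ∈ S, w a ≤ M) (hM : 0 ≤ M) :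
    ∑ s ∈ Z, ∏ i, w (s i)
      ≤ M ^ Fintype.card {i // ¬p i} * (∑ a ∈ S, w a) ^ Fintype.card {i // p i} := by
  classical
  have hS : ∀ s ∈ Z, ∀ i, s i ∈ S := fun s hs => Fintype.mem_piFinset.1 (hZ hs)
  calc ∑ s ∈ Z, ∏ i, w (s i)
      = ∑ s ∈ Z, (∏ i : {i // p i}, w (s i)) * ∏ i : {i // ¬p i}, w (s i) :=
        sum_congr rfl fun s _ => (Fintype.prod_subtype_mul_prod_subtype p _).symm
    _ ≤ ∑ s ∈ Z, (∏ i : {i // p i}, w (s i)) * M ^ Fintype.card {i // ¬p i} := by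
        refine sum_le_sum fun s hs => mul_le_mul_of_nonneg_left ?_ ?_
        · rw [← card_univ, ← prod_const]
          exact prod_le_prod (fun i _ => hw0 _ (hS s hs i)) fun i _ => hwM _ (hS s hs i)
        · exact prod_nonneg fun i _ => hw0 _ (hS s hs i)
    _ = (∑ u ∈ Z.image fun s (i : {i // p i}) => s i, ∏ i, w (u i))
          * M ^ Fintype.card {i // ¬p i} := by
        rw [sum_image hinj, sum_mul]
    _ ≤ (∑ u ∈ Fintype.piFinset fun _ : {i // p i} => S, ∏ i, w (u i))
          * M ^ Fintype.card {i // ¬p i} := by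
        refine mul_le_mul_of_nonneg_right ?_ (pow_nonneg hM _)
        refine sum_le_sum_of_subset_of_nonneg ?_ fun u hu _ => ?_
        · intro u hu
          obtain ⟨s, hs, rfl⟩ := mem_image.1 hu
          exact Fintype.mem_piFinset.2 fun i => hS s hs i
        · exact prod_nonneg fun i _ => hw0 _ (Fintype.mem_piFinset.1 hu i)
    _ = M ^ Fintype.card {i // ¬p i} * (∑ a ∈ S, w a) ^ Fintype.card {i // p i} := by
        rw [← prod_univ_sum, prod_const, card_univ, mul_comm]

theorem Pqd_le_general (q : ℝ) (hq0 : 0 < q) (hq1 : q < 1) (n : ℕ) (hn : 0 < n)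
    (d : ℕ) (hd : d ∣ n) :
    Pqd q d n ≤ Mq q (n / d) ^ d.totient := by
  obtain ⟨m, rfl⟩ := hd
  have hd0 : 0 < d := Nat.pos_of_mul_pos_right hn
  have hζ := Complex.isPrimitiveRoot_exp d hd0.ne'
  rw [Nat.mul_div_cancel_left m hd0, Pqd_eq_sum_prod_phi q (mul_comm m d) hd0.ne']
  have hlow : Fintype.card {r : Fin d // ¬d.totient ≤ r} = d.totient := by
    simp [Fintype.card_subtype, Fin.card_filter_val_lt, Nat.totient_le]
  calc _ ≤ Mq q m ^ Fintype.card {r : Fin d // ¬d.totient ≤ r}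
        * (∑ k ∈ range (m + 1), phi q k m) ^ Fintype.card {r : Fin d // d.totient ≤ r} :=
      sum_prod_le_of_injOn_restrict _ (filter_subset _ _)
        (fun s₁ h₁ s₂ h₂ h12 => hζ.eq_of_sum_natCast_mul_pow_eq hd0
          (((mem_filter.1 h₁).2).trans (mem_filter.1 h₂).2.symm) fun r hr => congrFun h12 ⟨r, hr⟩)
        (fun k _ => phi_nonneg hq0.le hq1.le k m)
        (fun k hk => phi_le_Mq (Nat.lt_succ_iff.1 (mem_range.1 hk)))
        (Mq_nonneg hq0.le hq1.le m)
    _ = Mq q m ^ d.totient := by rw [sum_range_phi, one_pow, mul_one, hlow]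

/-- Proposition 3.3 (upper bound): for a divisor d ≠ 1 of n,
P_q(d,n) ≤ M(q, n/d)^{φ(d)} where φ is Euler's totient function. -/
theorem Pqd_le (q : ℝ) (hq0 : 0 < q) (hq1 : q < 1) (n : ℕ) (hn : 0 < n)
    (d : ℕ) (hd : d ∣ n) (hd1 : d ≠ 1) :
    Pqd q d n ≤ Mq q (n / d) ^ d.totient :=
  Pqd_le_general q hq0 hq1 n hn d hd
end

section
/- Let q ∈ (0,1) be fixed and let m : ℕ → ℕ be a function with m(n) = O(n) (i.e., there is a constant A with m(n) ≤ A·n for all sufficiently large n). Then M(q,n)^{m(n)} = Θ((2πnq(1−q))^{−m(n)/2}) as n → ∞; i.e., there exist constants C₁, C₂, N > 0 such that C₁·(2πnq(1−q))^{−m(n)/2} ≤ M(q,n)^{m(n)} ≤ C₂·(2πnq(1−q))^{−m(n)/2} for all n > N. -/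
open Finset

/-!
The maximum of the binomial pmf is attained at the mode `⌊(n + 1) q⌋`, which lies within `1` of
`n q`. For such `k` and `j = n - k`, Stirling's formula with Robbins' explicit remainder splits
`log φ_q(k, n) + ½ log (2π n q (1 - q))` into the Stirling remainders, half the logarithm of
`(n q / k) (n (1 - q) / j)`, and the relative entropy `k log (n q / k) + j log (n (1 - q) / j)`,
which lies between `-(k - n q)² / (n q (1 - q))` and `0`. Each of these is `O(1 / n)`, so raising
to the power `m(n) = O(n)` costs at most a bounded factor `e^{±C}`.
-/

open Real Filter Topology
open scoped Nat

lemma abs_log_div_le {a x : ℝ} (ha : 2 ≤ a) (hx : |x - a| ≤ 1) : |log (a / x)| ≤ 2 / a := by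
  obtain ⟨hxl, hxu⟩ := abs_le.1 hx
  have hx0 : 0 < x := by linarith
  have ha0 : 0 < a := by linarith
  rw [abs_le]
  constructor
  · calc -(2 / a) ≤ 1 - x / a := by
          rw [le_sub_iff_add_le, ← sub_eq_neg_add, div_sub_div_same, div_le_one ha0]; linarith
      _ = 1 - (a / x)⁻¹ := by rw [inv_div]
      _ ≤ log (a / x) := one_sub_inv_le_log_of_pos (div_pos ha0 hx0)
  · calc log (a / x) ≤ a / x - 1 := log_le_sub_one_of_pos (div_pos ha0 hx0)
      _ ≤ 2 / a := by rw [div_sub_one hx0.ne', div_le_div_iff₀ hx0 ha0]; nlinarith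

lemma mul_log_div_mem {k a : ℝ} (hk : 0 < k) (ha : 0 < a) :
    k * log (a / k) ∈ Set.Icc (k - k ^ 2 / a) (a - k) := by
  constructor
  · calc k - k ^ 2 / a = k * (1 - (a / k)⁻¹) := by rw [inv_div]; ring
      _ ≤ k * log (a / k) :=
        mul_le_mul_of_nonneg_left (one_sub_inv_le_log_of_pos (div_pos ha hk)) hk.le
  · calc k * log (a / k) ≤ k * (a / k - 1) :=
        mul_le_mul_of_nonneg_left (log_le_sub_one_of_pos (div_pos ha hk)) hk.le
      _ = a - k := by field_simp

lemma mul_log_div_add_mul_log_div_mem {k j a b : ℝ} (hk : 0 < k) (hj : 0 < j) (ha : 0 < a)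
    (hb : 0 < b) (h : k + j = a + b) :
    k * log (a / k) + j * log (b / j) ∈ Set.Icc (-((k - a) ^ 2 * (1 / a + 1 / b))) 0 := by
  obtain ⟨hkl, hku⟩ := mul_log_div_mem hk ha
  obtain ⟨hjl, hju⟩ := mul_log_div_mem hj hb
  have hj' : j = a + b - k := by linarith
  have : k - k ^ 2 / a + (j - j ^ 2 / b) = -((k - a) ^ 2 * (1 / a + 1 / b)) := by
    rw [hj']
    field_simp
    ring
  constructor <;> linarith

lemma pow_mem_of_abs_log_add_half_log_le {x t ε C : ℝ} (hx : 0 < x) (ht : 0 < t) {m : ℕ}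
    (h : |log x + log t / 2| ≤ ε) (hC : m * ε ≤ C) :
    exp (-C) * t ^ (-(m : ℝ) / 2) ≤ x ^ m ∧ x ^ m ≤ exp C * t ^ (-(m : ℝ) / 2) := by
  have hm : |m * (log x + log t / 2)| ≤ C := by
    rw [abs_mul, Nat.abs_cast]
    exact (mul_le_mul_of_nonneg_left h m.cast_nonneg).trans hC
  rw [rpow_def_of_pos ht, ← exp_log hx, ← exp_nat_mul, ← exp_add, ← exp_add, exp_le_exp,
    exp_le_exp]
  constructor <;> linarith [abs_le.1 hm]

noncomputable def stirlingError (n : ℕ) : ℝ :=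
  log n ! - (n * log n - n + log n / 2 + log (2 * π) / 2)

section Stirling

variable {n : ℕ}

lemma stirlingError_nonneg (hn : n ≠ 0) : 0 ≤ stirlingError n :=
  sub_nonneg.2 (Stirling.le_log_factorial_stirling hn)

lemma stirlingError_eq_log_stirlingSeq (hn : n ≠ 0) :
    stirlingError n = log (Stirling.stirlingSeq n) - log √π := by
  have : (0 : ℝ) < n := by positivity
  rw [Stirling.log_stirlingSeq_formula, stirlingError, log_sqrt pi_pos.le,
    log_mul two_ne_zero this.ne', log_mul two_ne_zero pi_ne_zero, log_div this.ne' (exp_ne_zero 1),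
    log_exp]
  ring

lemma stirlingError_le (hn : n ≠ 0) : stirlingError n ≤ 1 / (12 * n) := by
  -- Robbins' stepwise bound telescopes, and `stirlingSeq` tends to `√π`.
  set s : ℕ → ℝ := fun k => log (Stirling.stirlingSeq k)
  have telescope : ∀ j : ℕ, s n - s (j + n) ≤ 1 / (12 * n) - 1 / (12 * (j + n : ℕ)) := by
    intro j
    induction j with
    | zero => simp
    | succ j ih =>
      have step := Stirling.log_stirlingSeq_sdiff_le (j + n)
      have hjn : (0 : ℝ) < (j + n : ℕ) := by positivity
      have : 1 / (12 * ((j + n : ℕ) : ℝ) * ((j + n : ℕ) + 1)) =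
          1 / (12 * (j + n : ℕ)) - 1 / (12 * (j + 1 + n : ℕ)) := by
        push_cast at hjn ⊢
        field_simp
        ring
      rw [show j + 1 + n = j + n + 1 by ring] at this ⊢
      simp only [s] at ih step ⊢
      linarith
  have hlim : Tendsto (fun j => s (j + n)) atTop (𝓝 (log √π)) :=
    ((continuousAt_log (by positivity)).tendsto.comp
      (Stirling.tendsto_stirlingSeq_sqrt_pi.comp (tendsto_add_atTop_nat n)))
  have : s n - 1 / (12 * n) ≤ log √π :=
    ge_of_tendsto' hlim fun j => by
      have := telescope j
      have : (0 : ℝ) ≤ 1 / (12 * (j + n : ℕ)) := by positivity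
      linarith
  rw [stirlingError_eq_log_stirlingSeq hn]
  linarith

lemma stirlingError_add_sub_mem {k j : ℕ} (hk : k ≠ 0) (hj : j ≠ 0) :
    stirlingError (k + j) - stirlingError k - stirlingError j ∈
      Set.Icc (-(1 / (12 * (k : ℝ)) + 1 / (12 * (j : ℝ))))
        (1 / (12 * ((k + j : ℕ) : ℝ))) := by
  have := stirlingError_nonneg (by omega : k + j ≠ 0)
  have := stirlingError_nonneg hk
  have := stirlingError_nonneg hj
  have := stirlingError_le (by omega : k + j ≠ 0)
  have := stirlingError_le hk
  have := stirlingError_le hj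
  constructor <;> linarith

end Stirling

section Binomial

variable {q : ℝ} {k n : ℕ}

lemma phi_pos (hq0 : 0 < q) (hq1 : q < 1) (hk : k ≤ n) : 0 < phi q k n := by
  have : (0 : ℝ) < n.choose k := mod_cast Nat.choose_pos hk
  unfold phi
  have : 0 < 1 - q := sub_pos.2 hq1
  positivity

lemma phi_succ_mul (q : ℝ) (hk : k < n) :
    phi q (k + 1) n * ((k + 1) * (1 - q)) = phi q k n * ((n - k) * q) := by
  have hchoose : (n.choose (k + 1) : ℝ) * (k + 1) = n.choose k * (n - k) := by
    rw [← Nat.cast_sub hk.le]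
    exact_mod_cast Nat.choose_succ_right_eq n k
  obtain ⟨j, rfl⟩ : ∃ j, n = k + 1 + j := ⟨n - (k + 1), by omega⟩
  simp only [phi, show k + 1 + j - k = j + 1 by omega, Nat.add_sub_cancel_left, pow_succ]
  linear_combination q ^ k * q * (1 - q) ^ j * (1 - q) * hchoose

lemma phi_le_phi_succ (hq0 : 0 < q) (hq1 : q < 1) (hk : k < n) (h : (k + 1 : ℝ) ≤ (n + 1) * q) :
    phi q k n ≤ phi q (k + 1) n := by
  refine le_of_mul_le_mul_right ?_ (by nlinarith : (0 : ℝ) < (k + 1) * (1 - q))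
  rw [phi_succ_mul q hk]
  exact mul_le_mul_of_nonneg_left (by linarith) (phi_pos hq0 hq1 hk.le).le

lemma phi_succ_le_phi (hq0 : 0 < q) (hq1 : q < 1) (hk : k < n) (h : (n + 1) * q ≤ (k + 1 : ℝ)) :
    phi q (k + 1) n ≤ phi q k n := by
  refine le_of_mul_le_mul_right ?_ (by nlinarith : (0 : ℝ) < (k + 1) * (1 - q))
  rw [phi_succ_mul q hk]
  exact mul_le_mul_of_nonneg_left (by linarith) (phi_pos hq0 hq1 hk.le).le

noncomputable def binomialMode (q : ℝ) (n : ℕ) : ℕ := ⌊(n + 1) * q⌋₊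

lemma binomialMode_le_mul (hq0 : 0 < q) : (binomialMode q n : ℝ) ≤ (n + 1) * q :=
  Nat.floor_le (by positivity)

lemma lt_binomialMode_add_one : (n + 1) * q < binomialMode q n + 1 :=
  Nat.lt_floor_add_one _

lemma binomialMode_lt (hq0 : 0 < q) (hq1 : q < 1) : binomialMode q n < n + 1 := by
  have : (binomialMode q n : ℝ) < n + 1 :=
    (binomialMode_le_mul hq0).trans_lt (by nlinarith)
  exact_mod_cast this

lemma abs_binomialMode_sub_le (hq0 : 0 < q) (hq1 : q < 1) :
    |(binomialMode q n : ℝ) - n * q| ≤ 1 := by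
  have := binomialMode_le_mul (n := n) hq0
  have := lt_binomialMode_add_one (q := q) (n := n)
  rw [abs_le]
  constructor <;> nlinarith

lemma phi_le_phi_binomialMode (hq0 : 0 < q) (hq1 : q < 1) (hk : k ≤ n) :
    phi q k n ≤ phi q (binomialMode q n) n := by
  set K := binomialMode q n
  rcases le_total k K with hkK | hKk
  · refine monotoneOn_of_le_succ (f := (phi q · n)) Set.ordConnected_Iic ?_ hkK
      (Set.mem_Iic.2 le_rfl) hkK
    intro i _ _ hi
    rw [Order.succ_eq_add_one, Set.mem_Iic] at hi
    rw [Order.succ_eq_add_one]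
    have : K < n + 1 := binomialMode_lt hq0 hq1
    exact phi_le_phi_succ hq0 hq1 (by omega)
      ((show (i + 1 : ℝ) ≤ K by exact_mod_cast hi).trans (binomialMode_le_mul hq0))
  · refine antitoneOn_of_succ_le (f := (phi q · n)) (s := Set.Icc K n) Set.ordConnected_Icc ?_
      ⟨le_rfl, by omega⟩ ⟨hKk, hk⟩ hKk
    intro i _ hi hi'
    rw [Order.succ_eq_add_one] at hi' ⊢
    have hi : (K : ℝ) ≤ i := mod_cast hi.1
    exact phi_succ_le_phi hq0 hq1 hi'.2 (lt_binomialMode_add_one.le.trans (by linarith))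

lemma Mq_eq_phi_binomialMode (hq0 : 0 < q) (hq1 : q < 1) :
    Mq q n = phi q (binomialMode q n) n :=
  le_antisymm
    (sup'_le _ _ fun _ hk => phi_le_phi_binomialMode hq0 hq1 (Nat.lt_succ_iff.1 (mem_range.1 hk)))
    (le_sup' (fun k => phi q k n) (mem_range.2 (binomialMode_lt hq0 hq1)))

lemma Mq_pos (hq0 : 0 < q) (hq1 : q < 1) : 0 < Mq q n := by
  rw [Mq_eq_phi_binomialMode hq0 hq1]
  exact phi_pos hq0 hq1 (Nat.lt_succ_iff.1 (binomialMode_lt hq0 hq1))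

end Binomial

lemma log_phi_add_half_log_eq {q : ℝ} (hq0 : 0 < q) (hq1 : q < 1) {k j n : ℕ} (hk : k ≠ 0)
    (hj : j ≠ 0) (hn : k + j = n) :
    log (phi q k n) + log (2 * π * n * q * (1 - q)) / 2 =
      (log (n * q / k) + log (n * (1 - q) / j)) / 2
        + (k * log (n * q / k) + j * log (n * (1 - q) / j))
        + (stirlingError n - stirlingError k - stirlingError j) := by
  subst hn
  have : (0 : ℝ) < k := by positivity
  have : (0 : ℝ) < j := by positivity
  have : 0 < 1 - q := sub_pos.2 hq1
  simp only [phi, stirlingError, Nat.add_sub_cancel_left, Nat.cast_add_choose]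
  simp (disch := positivity) only [log_mul, log_div, log_pow]
  push_cast
  ring

lemma abs_log_phi_add_half_log_le {q : ℝ} (hq0 : 0 < q) (hq1 : q < 1) {k n : ℕ}
    (hk : |(k : ℝ) - n * q| ≤ 1) (hnq : 2 ≤ n * q) (hnq' : 2 ≤ n * (1 - q)) :
    |log (phi q k n) + log (2 * π * n * q * (1 - q)) / 2| ≤
      3 * (1 / (n * q) + 1 / (n * (1 - q))) := by
  obtain ⟨hkl, hku⟩ := abs_le.1 hk
  have hkn : k < n := by
    have : (k : ℝ) < n := by linarith
    exact_mod_cast this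
  obtain ⟨j, rfl⟩ : ∃ j, n = k + j := ⟨n - k, by omega⟩
  have hk0 : (0 : ℝ) < k := by linarith
  have hjb : |(j : ℝ) - (k + j : ℕ) * (1 - q)| ≤ 1 := by
    rw [← abs_neg]
    convert hk using 2
    push_cast
    ring
  obtain ⟨hjl, hju⟩ := abs_le.1 hjb
  have hj0 : (0 : ℝ) < j := by linarith
  rw [log_phi_add_half_log_eq hq0 hq1 (by exact_mod_cast hk0.ne') (by exact_mod_cast hj0.ne')
    rfl]
  set a : ℝ := (k + j : ℕ) * q
  set b : ℝ := (k + j : ℕ) * (1 - q)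
  have hab : ((k + j : ℕ) : ℝ) = a + b := by ring
  have hlogk := abs_le.1 (abs_log_div_le hnq hk)
  have hlogj := abs_le.1 (abs_log_div_le hnq' hjb)
  obtain ⟨hentl, hentu⟩ := mul_log_div_add_mul_log_div_mem hk0 hj0 (a := a) (b := b)
    (by positivity) (by positivity) (mod_cast hab)
  have hsq : (k - a) ^ 2 * (1 / a + 1 / b) ≤ 1 / a + 1 / b :=
    mul_le_of_le_one_left (by positivity) (by nlinarith)
  obtain ⟨hstirl, hstiru⟩ :=
    stirlingError_add_sub_mem (by exact_mod_cast hk0.ne') (by exact_mod_cast hj0.ne')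
  have hn12 : 1 / (12 * ((k + j : ℕ) : ℝ)) ≤ 1 / a :=
    one_div_le_one_div_of_le (by positivity) (by linarith)
  have hk12 : 1 / (12 * (k : ℝ)) ≤ 1 / a :=
    one_div_le_one_div_of_le (by positivity) (by linarith)
  have hj12 : 1 / (12 * (j : ℝ)) ≤ 1 / b :=
    one_div_le_one_div_of_le (by positivity) (by linarith)
  have ha : 2 / a = 2 * (1 / a) := by ring
  have hb : 2 / b = 2 * (1 / b) := by ring
  have ha0 : 0 ≤ 1 / a := by positivity
  have hb0 : 0 ≤ 1 / b := by positivity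
  rw [abs_le]
  constructor <;> linarith

lemma abs_log_Mq_add_half_log_le {q : ℝ} (hq0 : 0 < q) (hq1 : q < 1) {n : ℕ} (hnq : 2 ≤ n * q)
    (hnq' : 2 ≤ n * (1 - q)) :
    |log (Mq q n) + log (2 * π * n * q * (1 - q)) / 2| ≤
      3 * (1 / (n * q) + 1 / (n * (1 - q))) := by
  rw [Mq_eq_phi_binomialMode hq0 hq1]
  exact abs_log_phi_add_half_log_le hq0 hq1 (abs_binomialMode_sub_le hq0 hq1) hnq hnq'

/-- Lemma 4.2: if m(n) = O(n), then M(q,n)^{m(n)} = Θ((2πnq(1−q))^{−m(n)/2}). -/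
theorem Mq_pow_theta (q : ℝ) (hq0 : 0 < q) (hq1 : q < 1) (m : ℕ → ℕ)
    (hm : ∃ A : ℝ, ∀ᶠ n in Filter.atTop, (m n : ℝ) ≤ A * n) :
    ∃ C₁ > (0 : ℝ), ∃ C₂ > (0 : ℝ), ∃ N : ℕ, ∀ n : ℕ, n > N →
      C₁ * (2 * Real.pi * n * q * (1 - q)) ^ (-(m n : ℝ) / 2) ≤ Mq q n ^ m n ∧
      Mq q n ^ m n ≤ C₂ * (2 * Real.pi * n * q * (1 - q)) ^ (-(m n : ℝ) / 2) := by
  obtain ⟨A, hA⟩ := hm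
  obtain ⟨N₀, hN₀⟩ := eventually_atTop.1 hA
  have h1q : 0 < 1 - q := sub_pos.2 hq1
  set C := 3 * |A| * (1 / q + 1 / (1 - q))
  refine ⟨exp (-C), exp_pos _, exp C, exp_pos _, max N₀ ⌈2 / q + 2 / (1 - q)⌉₊,
    fun n hn => ?_⟩
  have hn' : 2 / q + 2 / (1 - q) ≤ n :=
    (Nat.le_ceil _).trans (by exact_mod_cast (le_max_right _ _).trans hn.le)
  have hnq : 2 ≤ n * q := (div_le_iff₀ hq0).1 (by linarith [div_pos two_pos h1q])
  have hnq' : 2 ≤ n * (1 - q) := (div_le_iff₀ h1q).1 (by linarith [div_pos two_pos hq0])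
  have hn0 : (0 : ℝ) < n := by nlinarith
  have hmn : (m n : ℝ) ≤ |A| * n :=
    (hN₀ n ((le_max_left _ _).trans hn.le)).trans (by gcongr; exact le_abs_self A)
  have hmC : m n * (3 * (1 / (n * q) + 1 / (n * (1 - q)))) ≤ C :=
    calc (m n : ℝ) * (3 * (1 / (n * q) + 1 / (n * (1 - q))))
        ≤ |A| * n * (3 * (1 / (n * q) + 1 / (n * (1 - q)))) := by gcongr
      _ = C := by simp only [C]; field_simp
  exact pow_mem_of_abs_log_add_half_log_le (Mq_pos hq0 hq1) (by positivity)
    (abs_log_Mq_add_half_log_le hq0 hq1 hnq hnq') hmC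
end
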